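/- arXiv:1804.03244 — 4 statements merged into one kernel-verified Lean document; each statement's English description precedes it below -/
import Mathlib

section
/- For all natural numbers k ≤ d, the number of positions i such that the contiguous sublist of S_d starting at index i of length |S_k| = 2^{k+1}-1 equals S_k is exactly 2^{d-k}. -/
def S : ℕ → List ℕ
  | 0 => [1]
  | k + 1 => S k ++ S k ++ [2 ^ (k + 1)]

/-!
Since `S (e + 1) = S e ++ S e ++ [2 ^ (e + 1)]`, the occurrences of `S k` (for `k ≤ e`) in
`S (e + 1)` are those in the two copies of `S e`, provided no occurrence straddles a seam. Every
entry of `S k` is at most `2 ^ k`, and all but the last are smaller, so an occurrence can contain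
neither the final `2 ^ (e + 1)` nor the `2 ^ e` ending the first copy, except as its own last
entry. Hence the count doubles with each step from `d = k`, where `S k` occurs once.
-/

open Finset

section Occurrences

variable {α : Type*} {P A B : List α} {i : ℕ}

lemma add_length_le_of_prefix_drop (hP : P ≠ []) (h : P <+: A.drop i) :
    i + P.length ≤ A.length := by
  have hle := h.length_le
  have hpos := List.length_pos_of_ne_nil hP
  rw [List.length_drop] at hle
  omega

lemma add_length_le_of_prefix_drop_append (hA : A ≠ []) (hlast : A.getLast hA ∉ P.dropLast)
    (hi : i < A.length) (h : P <+: (A ++ B).drop i) : i + P.length ≤ A.length := by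
  by_contra hlt
  -- otherwise the last letter of `A` sits strictly inside the occurrence
  have hj : A.length - 1 - i < P.dropLast.length := by
    rw [List.length_dropLast]
    omega
  apply hlast
  convert List.getElem_mem hj using 1
  rw [List.getElem_dropLast, h.getElem, List.getElem_drop, List.getElem_append_left (by omega),
    List.getLast_eq_getElem]
  congr 1
  omega

variable [DecidableEq α]

def occurrences (P A : List α) : Finset ℕ :=
  (range A.length).filter fun i => P <+: A.drop i

lemma occurrences_self (hP : P ≠ []) : occurrences P P = {0} := by
  ext i
  simp only [occurrences, mem_filter, mem_range, mem_singleton]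
  constructor
  · rintro ⟨-, h⟩
    have := add_length_le_of_prefix_drop hP h
    omega
  · rintro rfl
    exact ⟨List.length_pos_of_ne_nil hP, List.prefix_refl P⟩

lemma occurrences_append (hP : P ≠ [])
    (hfit : ∀ i < A.length, P <+: (A ++ B).drop i → i + P.length ≤ A.length) :
    occurrences P (A ++ B) =
      occurrences P A ∪ (occurrences P B).map (addRightEmbedding A.length) := by
  ext i
  simp only [occurrences, mem_union, mem_map, mem_filter, mem_range, addRightEmbedding_apply,
    List.length_append]
  by_cases hi : i < A.length
  · have hA : A.length - i = (A.drop i).length := List.length_drop.symm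
    constructor
    · rintro ⟨-, h⟩
      have hle := hfit i hi h
      rw [List.drop_append_of_le_length hi.le, List.isPrefix_append_of_length (by omega)] at h
      exact Or.inl ⟨hi, h⟩
    · rintro (⟨-, h⟩ | ⟨j, -, rfl⟩)
      · have hle := add_length_le_of_prefix_drop hP h
        refine ⟨by omega, ?_⟩
        rw [List.drop_append_of_le_length hi.le, List.isPrefix_append_of_length (by omega)]
        exact h
      · omega
  · have hdrop : (A ++ B).drop i = B.drop (i - A.length) := by
      rw [List.drop_append, List.drop_eq_nil_of_le (by omega), List.nil_append]
    rw [hdrop]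
    constructor
    · rintro ⟨hiB, h⟩
      exact Or.inr ⟨i - A.length, ⟨by omega, h⟩, by omega⟩
    · rintro (⟨hi', -⟩ | ⟨j, ⟨hj, h⟩, rfl⟩)
      · omega
      · exact ⟨by omega, by rwa [Nat.add_sub_cancel]⟩

lemma card_occurrences_append (hP : P ≠ [])
    (hfit : ∀ i < A.length, P <+: (A ++ B).drop i → i + P.length ≤ A.length) :
    (occurrences P (A ++ B)).card = (occurrences P A).card + (occurrences P B).card := by
  rw [occurrences_append hP hfit, card_union_of_disjoint, card_map]
  rw [disjoint_left]
  simp only [occurrences, mem_map, mem_filter, mem_range, addRightEmbedding_apply]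
  rintro _ ⟨hi, -⟩ ⟨j, -, rfl⟩
  omega

lemma occurrences_append_singleton {x : α} (hP : P ≠ []) (hx : x ∉ P) :
    occurrences P (A ++ [x]) = occurrences P A := by
  have hfit : ∀ i < A.length, P <+: (A ++ [x]).drop i → i + P.length ≤ A.length := by
    intro i hi h
    by_contra hlt
    apply hx
    have hj : A.length - i < P.length := by omega
    convert List.getElem_mem hj using 1
    rw [h.getElem, List.getElem_drop, List.getElem_append_right (by omega)]
    simp
  have hx' : occurrences P [x] = ∅ := by
    ext i
    simp only [occurrences, mem_filter, mem_range, List.length_singleton, Finset.notMem_empty,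
      iff_false, not_and]
    intro hi h
    obtain rfl : i = 0 := by omega
    apply hx
    convert List.getElem_mem (List.length_pos_of_ne_nil hP) using 1
    rw [h.getElem]
    simp
  rw [occurrences_append hP hfit, hx', map_empty, union_empty]

end Occurrences

lemma length_S (k : ℕ) : (S k).length = 2 ^ (k + 1) - 1 := by
  induction k with
  | zero => rfl
  | succ k ih =>
    have := Nat.one_le_two_pow (n := k + 1)
    simp only [S, List.length_append, List.length_singleton, ih, pow_succ]
    omega

lemma S_ne_nil (k : ℕ) : S k ≠ [] := by
  cases k <;> simp [S]

lemma getLast_S (k : ℕ) : (S k).getLast (S_ne_nil k) = 2 ^ k := by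
  cases k <;> simp [S]

lemma le_two_pow_of_mem_S {k x : ℕ} (hx : x ∈ S k) : x ≤ 2 ^ k := by
  induction k with
  | zero => simp_all [S]
  | succ k ih =>
    simp only [S, List.mem_append, List.mem_singleton, or_self] at hx
    rcases hx with hx | rfl
    · exact (ih hx).trans (Nat.pow_le_pow_right two_pos k.le_succ)
    · rfl

lemma lt_two_pow_of_mem_dropLast_S {k x : ℕ} (hx : x ∈ (S k).dropLast) : x < 2 ^ k := by
  cases k with
  | zero => simp [S] at hx
  | succ k =>
    simp only [S, List.dropLast_concat, List.mem_append, or_self] at hx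
    exact (le_two_pow_of_mem_S hx).trans_lt (Nat.pow_lt_pow_right one_lt_two k.lt_succ_self)

lemma card_occurrences_S_succ {k e : ℕ} (hk : k ≤ e) :
    (occurrences (S k) (S (e + 1))).card = 2 * (occurrences (S k) (S e)).card := by
  have hS : S (e + 1) = S e ++ (S e ++ [2 ^ (e + 1)]) := by simp [S]
  have hnotMem : 2 ^ (e + 1) ∉ S k := fun h =>
    (le_two_pow_of_mem_S h).not_gt (Nat.pow_lt_pow_right one_lt_two (Nat.lt_succ_of_le hk))
  have hlast : (S e).getLast (S_ne_nil e) ∉ (S k).dropLast := fun h =>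
    (lt_two_pow_of_mem_dropLast_S h).not_ge
      ((getLast_S e).symm ▸ Nat.pow_le_pow_right two_pos hk)
  rw [hS, card_occurrences_append (S_ne_nil k)
      (fun i hi => add_length_le_of_prefix_drop_append (S_ne_nil e) hlast hi),
    occurrences_append_singleton (S_ne_nil k) hnotMem, two_mul]

lemma card_occurrences_S {k d : ℕ} (hk : k ≤ d) :
    (occurrences (S k) (S d)).card = 2 ^ (d - k) := by
  induction d, hk using Nat.le_induction with
  | base => simp [occurrences_self (S_ne_nil k)]
  | succ e hke ih => rw [card_occurrences_S_succ hke, ih, Nat.succ_sub hke, pow_succ']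

theorem S_appearances (k d : ℕ) (h : k ≤ d) :
    ((Finset.range ((S d).length)).filter
      (fun i => (((S d).drop i).take (2 ^ (k + 1) - 1)) = S k)).card = 2 ^ (d - k) := by
  rw [← card_occurrences_S h, ← length_S k]
  congr 1
  exact filter_congr fun i _ => eq_comm.trans List.prefix_iff_eq_take.symm
end

section
/- For all natural numbers k ≤ d, any two distinct occurrences of S_k in S_d are non-overlapping: if S_k appears in S_d at positions i and i' with i < i', then i' ≥ i + |S_k|. -/
/-!
The last entry of `S k` is `2 ^ k`, so two occurrences of `S k` at `i < i'` put `2 ^ k` at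
the indices `i + |S k| - 1 < i' + |S k| - 1` of `S d`. It therefore suffices that any two
indices carrying `2 ^ k` in `S d` are at least `|S k|` apart. This follows by induction on `d`
from `S (d + 1) = S d ++ S d ++ [2 ^ (d + 1)]`, together with the fact that `2 ^ k` never
occurs in `S d` before index `|S k| - 1`: for two indices in different copies of `S d`, the
first is at most `|S d| - 1` and the second at least `|S d| + |S k| - 1`.
-/

theorem List.getElem?_add_of_take_drop_eq {α : Type*} {l p : List α} {i j : ℕ}
    (h : (l.drop i).take p.length = p) (hj : j < p.length) : l[i + j]? = p[j]? := by
  rw [← List.getElem?_drop, ← List.getElem?_take_of_lt hj, h]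

namespace S

theorem length_succ (n : ℕ) : (S (n + 1)).length = 2 * (S n).length + 1 := by
  simp only [S, List.length_append, List.length_singleton]
  ring

theorem length_pos (k : ℕ) : 0 < (S k).length := by
  cases k <;> simp [S]

theorem getLast?_eq (k : ℕ) : (S k).getLast? = some (2 ^ k) := by
  cases k <;> simp [S]

theorem le_two_pow_of_mem {n x : ℕ} (hx : x ∈ S n) : x ≤ 2 ^ n := by
  induction n with
  | zero => simp_all [S]
  | succ n ih =>
    simp only [S, List.mem_append, List.mem_singleton, or_self] at hx
    rcases hx with hx | rfl
    · exact (ih hx).trans (Nat.pow_le_pow_right two_pos n.le_succ)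
    · rfl

theorem getElem?_succ_eq_some {n j x : ℕ} (h : (S (n + 1))[j]? = some x) :
    (j < (S n).length ∧ (S n)[j]? = some x) ∨
      (∃ b < (S n).length, j = (S n).length + b ∧ (S n)[b]? = some x) ∨
      (j = 2 * (S n).length ∧ x = 2 ^ (n + 1)) := by
  have hj : j < 2 * (S n).length + 1 := length_succ n ▸ (List.getElem?_eq_some_iff.1 h).1
  simp only [S] at h
  rcases lt_or_ge j (S n).length with hj₁ | hj₁
  · rw [List.getElem?_append_left (by simp; omega), List.getElem?_append_left hj₁] at h
    exact .inl ⟨hj₁, h⟩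
  rcases lt_or_ge j (2 * (S n).length) with hj₂ | hj₂
  · rw [List.getElem?_append_left (by simp; omega), List.getElem?_append_right hj₁] at h
    exact .inr (.inl ⟨j - (S n).length, by omega, by omega, h⟩)
  · rw [List.getElem?_append_right (by simp; omega)] at h
    have hj₃ : j = 2 * (S n).length := by omega
    simp [hj₃, two_mul] at h
    exact .inr (.inr ⟨hj₃, h.symm⟩)

theorem getElem?_succ_eq_two_pow_succ {n j : ℕ} (h : (S (n + 1))[j]? = some (2 ^ (n + 1))) :
    j = 2 * (S n).length := by
  have two_pow_not_mem : 2 ^ (n + 1) ∉ S n := fun hmem =>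
    (le_two_pow_of_mem hmem).not_gt (Nat.pow_lt_pow_right one_lt_two n.lt_succ_self)
  rcases getElem?_succ_eq_some h with ⟨-, hn⟩ | ⟨b, -, -, hn⟩ | ⟨hj, -⟩
  · exact (two_pow_not_mem (List.mem_of_getElem? hn)).elim
  · exact (two_pow_not_mem (List.mem_of_getElem? hn)).elim
  · exact hj

theorem length_le_of_getElem?_eq_two_pow {m k j : ℕ} (h : (S m)[j]? = some (2 ^ k)) :
    (S k).length ≤ j + 1 := by
  induction m generalizing j with
  | zero =>
    obtain ⟨rfl, hk⟩ : j = 0 ∧ 1 = 2 ^ k := by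
      simpa [S, List.getElem?_cons, eq_comm] using h
    simp [S, Nat.pow_right_injective le_rfl (hk.symm.trans (pow_zero 2).symm)]
  | succ n ih =>
    rcases getElem?_succ_eq_some h with ⟨-, hn⟩ | ⟨b, -, rfl, hn⟩ | ⟨rfl, hk⟩
    · exact ih hn
    · have := ih hn
      omega
    · rw [Nat.pow_right_injective le_rfl hk, length_succ]

theorem add_length_le_of_getElem?_eq_two_pow {m k j j' : ℕ} (hlt : j < j')
    (h : (S m)[j]? = some (2 ^ k)) (h' : (S m)[j']? = some (2 ^ k)) :
    j + (S k).length ≤ j' := by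
  induction m generalizing j j' with
  | zero =>
    have hj' := (List.getElem?_eq_some_iff.1 h').1
    simp only [S, List.length_singleton] at hj'
    omega
  | succ n ih =>
    rcases getElem?_succ_eq_some h' with ⟨hj', hn'⟩ | ⟨b', hb', rfl, hn'⟩ | ⟨rfl, hk⟩
    · rcases getElem?_succ_eq_some h with ⟨-, hn⟩ | ⟨b, -, rfl, -⟩ | ⟨rfl, -⟩
      · exact ih hlt hn hn'
      all_goals omega
    · rcases getElem?_succ_eq_some h with ⟨hj, -⟩ | ⟨b, -, rfl, hn⟩ | ⟨rfl, -⟩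
      · have := length_le_of_getElem?_eq_two_pow hn'
        omega
      · have := ih (by omega) hn hn'
        omega
      · omega
    · obtain rfl := Nat.pow_right_injective le_rfl hk
      have := getElem?_succ_eq_two_pow_succ h
      omega

end S

theorem S_appearances_disjoint_general (k d : ℕ) (i i' : ℕ) (hlt : i < i')
    (hi : ((S d).drop i).take ((S k).length) = S k)
    (hi' : ((S d).drop i').take ((S k).length) = S k) :
    i' ≥ i + (S k).length := by
  have hpos := S.length_pos k
  have hlast : (S k)[(S k).length - 1]? = some (2 ^ k) := by
    rw [← List.getLast?_eq_getElem?, S.getLast?_eq]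
  have hi_last := (List.getElem?_add_of_take_drop_eq hi (by omega)).trans hlast
  have hi'_last := (List.getElem?_add_of_take_drop_eq hi' (by omega)).trans hlast
  have := S.add_length_le_of_getElem?_eq_two_pow (by omega) hi_last hi'_last
  omega

theorem S_appearances_disjoint (k d : ℕ) (h : k ≤ d) (i i' : ℕ) (hlt : i < i')
    (hi : ((S d).drop i).take ((S k).length) = S k)
    (hi' : ((S d).drop i').take ((S k).length) = S k) :
    i' ≥ i + (S k).length :=
  S_appearances_disjoint_general k d i i' hlt hi hi'
end

section
/- Let j be a natural number and P a positive rational number. Setting n_i = 2^i and P_i = P/2^i for 0 ≤ i ≤ j, the sum of completion times of the optimal shortest-first schedule, namely Σ_{i=0}^{j} Σ_{k=1}^{n_i} ( P_i·k + Σ_{ℓ=i+1}^{j} n_ℓ·P_ℓ ), is at most 4·P·n_j = 4·P·2^j. -/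
lemma gaussQ (n : ℕ) : ∑ k ∈ Finset.Icc (1 : ℕ) n, (k : ℚ) = n * (n + 1) / 2 := by
  induction n with
  | zero => simp
  | succ n ih =>
    rw [Finset.sum_Icc_succ_top (by omega)]
    push_cast
    rw [ih]; ring

lemma Sval (P : ℚ) (j : ℕ) :
    ∑ i ∈ Finset.range (j + 1), ∑ k ∈ Finset.Icc (1 : ℕ) (2 ^ i),
      ((P / 2 ^ i) * (k : ℚ) + ∑ l ∈ Finset.Icc (i + 1) j, (2 ^ l : ℚ) * (P / 2 ^ l))
      = P * (3 * 2 ^ j - (j : ℚ) / 2 - 2) := by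
  induction j with
  | zero => norm_num
  | succ j ih =>
    rw [Finset.sum_range_succ]
    have h1 : ∀ i ∈ Finset.range (j + 1),
        (∑ k ∈ Finset.Icc (1 : ℕ) (2 ^ i),
          ((P / 2 ^ i) * (k : ℚ) + ∑ l ∈ Finset.Icc (i + 1) (j + 1), (2 ^ l : ℚ) * (P / 2 ^ l)))
        = (∑ k ∈ Finset.Icc (1 : ℕ) (2 ^ i),
          ((P / 2 ^ i) * (k : ℚ) + ∑ l ∈ Finset.Icc (i + 1) j, (2 ^ l : ℚ) * (P / 2 ^ l)))
          + 2 ^ i * P := by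
      intro i hi
      have hij : i + 1 ≤ j + 1 := by
        have := Finset.mem_range.mp hi; omega
      have hl : ∑ l ∈ Finset.Icc (i + 1) (j + 1), (2 ^ l : ℚ) * (P / 2 ^ l)
          = (∑ l ∈ Finset.Icc (i + 1) j, (2 ^ l : ℚ) * (P / 2 ^ l)) + P := by
        rw [Finset.sum_Icc_succ_top hij]
        have : ((2 : ℚ) ^ (j + 1)) ≠ 0 := by positivity
        field_simp
      simp_rw [hl, ← add_assoc]
      rw [Finset.sum_add_distrib, Finset.sum_const, Nat.card_Icc]
      simp [nsmul_eq_mul]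
    rw [Finset.sum_congr rfl h1, Finset.sum_add_distrib, ih]
    have hgeom : ∑ i ∈ Finset.range (j + 1), (2 : ℚ) ^ i * P = (2 ^ (j + 1) - 1) * P := by
      rw [← Finset.sum_mul, geom_sum_eq (by norm_num)]
      norm_num
    rw [hgeom]
    have hempty : Finset.Icc (j + 1 + 1) (j + 1) = (∅ : Finset ℕ) := by
      apply Finset.Icc_eq_empty; omega
    rw [hempty]
    simp only [Finset.sum_empty, add_zero]
    rw [← Finset.mul_sum, gaussQ]
    have hne : ((2 : ℚ) ^ (j + 1)) ≠ 0 := by positivity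
    push_cast
    field_simp
    ring

theorem opt_cost_bound (j : ℕ) (P : ℚ) (hP : 0 < P) :
    ∑ i ∈ Finset.range (j + 1), ∑ k ∈ Finset.Icc (1 : ℕ) (2 ^ i),
      ((P / 2 ^ i) * (k : ℚ) + ∑ l ∈ Finset.Icc (i + 1) j, (2 ^ l : ℚ) * (P / 2 ^ l))
      ≤ 4 * P * 2 ^ j := by
  rw [Sval]
  have h1 : (1 : ℚ) ≤ 2 ^ j := one_le_pow₀ (by norm_num)
  have hj : (0 : ℚ) ≤ (j : ℚ) := Nat.cast_nonneg j
  nlinarith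
end

section
/- For all natural numbers n and k with 1 ≤ k < n, the following inequality holds: 2^k·( Σ_{j=1}^{2^{n+1}} j + Σ_{i=1}^{k-1} Σ_{j=1}^{2^{n-i}} ( i·2^n + j·2^i ) + Σ_{j=1}^{(n-k)·2^{n-k}} ( k·2^n + j·2^k ) ) ≤ 2^{2n}·( 7·2^k + n·(n-k) ). -/
/-!
Each block of equal-size jobs contributes an arithmetic progression of completion times, summed
in closed form by Gauss' formula. The blocks of size `2 ^ i` with `1 ≤ i < k` contribute, after
doubling, `i * 2 ^ (2n+1-i) + 2 ^ (2n-i) + 2 ^ n`; the sums of `i * 2 ^ (-i)` and `2 ^ (-i)` are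
at most `2` and `1`, so these blocks cost at most `5 * 4 ^ n + k * 2 ^ n` in total. What remains
is polynomial arithmetic in `2 ^ k` and `2 ^ n`, closed using `n + 2 ≤ 2 * 2 ^ n`.
-/

open Finset

lemma sum_Icc_id_mul_two (M : ℕ) : (∑ j ∈ Icc 1 M, j) * 2 = M * (M + 1) := by
  induction M with
  | zero => simp
  | succ M ih => rw [sum_Icc_succ_top (by omega), add_mul, ih]; ring

lemma sum_Icc_add_mul_mul_two (c d M : ℕ) :
    (∑ j ∈ Icc 1 M, (c + j * d)) * 2 = M * (2 * c + (M + 1) * d) := by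
  rw [sum_add_distrib, sum_const, Nat.card_Icc, Nat.add_sub_cancel, ← sum_mul, smul_eq_mul,
    add_mul, mul_right_comm _ d, sum_Icc_id_mul_two]
  ring

lemma sum_Icc_two_pow_sub_add {N m : ℕ} (h : m ≤ N) :
    ∑ i ∈ Icc 1 m, 2 ^ (N - i) + 2 ^ (N - m) = 2 ^ N := by
  induction m with
  | zero => simp
  | succ m ih =>
    rw [sum_Icc_succ_top (by omega), ← ih (by omega),
      show N - m = N - (m + 1) + 1 by omega, pow_succ]
    ring

lemma sum_Icc_mul_two_pow_sub_add {N m : ℕ} (h : m ≤ N) :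
    ∑ i ∈ Icc 1 m, i * 2 ^ (N - i) + (m + 2) * 2 ^ (N - m) = 2 ^ (N + 1) := by
  induction m with
  | zero => simp [pow_succ, mul_comm]
  | succ m ih =>
    rw [sum_Icc_succ_top (by omega), ← ih (by omega),
      show N - m = N - (m + 1) + 1 by omega, pow_succ]
    ring

lemma sum_block_completion_mul_two {i n : ℕ} (hi : i ≤ n) :
    (∑ j ∈ Icc 1 (2 ^ (n - i)), (i * 2 ^ n + j * 2 ^ i)) * 2
      = i * 2 ^ (2 * n + 1 - i) + 2 ^ (2 * n - i) + 2 ^ n := by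
  obtain ⟨e, rfl⟩ := Nat.exists_eq_add_of_le hi
  rw [sum_Icc_add_mul_mul_two, Nat.add_sub_cancel_left,
    show 2 * (i + e) + 1 - i = i + e + e + 1 by omega, show 2 * (i + e) - i = i + e + e by omega]
  ring

lemma sum_sum_block_completion_mul_two_le {k n : ℕ} (hkn : k ≤ n) :
    (∑ i ∈ Icc 1 (k - 1), ∑ j ∈ Icc 1 (2 ^ (n - i)), (i * 2 ^ n + j * 2 ^ i)) * 2
      ≤ 5 * 2 ^ (2 * n) + k * 2 ^ n := by
  have hle : ∀ i ∈ Icc 1 (k - 1), i ≤ n := fun i hi => by rw [mem_Icc] at hi; omega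
  rw [sum_mul, sum_congr rfl fun i hi => sum_block_completion_mul_two (hle i hi),
    sum_add_distrib, sum_add_distrib, sum_const, Nat.card_Icc, Nat.add_sub_cancel, smul_eq_mul]
  have hlin := (Nat.le_add_right _ _).trans
    (sum_Icc_mul_two_pow_sub_add (N := 2 * n + 1) (m := k - 1) (by omega)).le
  have hgeo := (Nat.le_add_right _ _).trans
    (sum_Icc_two_pow_sub_add (N := 2 * n) (m := k - 1) (by omega)).le
  have : 2 ^ (2 * n + 1 + 1) = 4 * 2 ^ (2 * n) := by ring
  have := Nat.mul_le_mul_right (2 ^ n) (Nat.sub_le k 1)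
  omega

lemma two_pow_mul_sum_last_block_completion_mul_two {k n : ℕ} (hkn : k ≤ n) :
    2 ^ k * ((∑ j ∈ Icc 1 ((n - k) * 2 ^ (n - k)), (k * 2 ^ n + j * 2 ^ k)) * 2)
      = (n - k) * 2 ^ n * ((n + k) * 2 ^ n + 2 ^ k) := by
  obtain ⟨d, rfl⟩ := Nat.exists_eq_add_of_le hkn
  rw [sum_Icc_add_mul_mul_two, Nat.add_sub_cancel_left]
  ring

theorem static_opt_bound_general (n k : ℕ) (hkn : k < n) :
    2 ^ k * (∑ j ∈ Finset.Icc 1 (2 ^ (n + 1)), j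
      + ∑ i ∈ Finset.Icc 1 (k - 1), ∑ j ∈ Finset.Icc 1 (2 ^ (n - i)), (i * 2 ^ n + j * 2 ^ i)
      + ∑ j ∈ Finset.Icc 1 ((n - k) * 2 ^ (n - k)), (k * 2 ^ n + j * 2 ^ k))
    ≤ 2 ^ (2 * n) * (7 * 2 ^ k + n * (n - k)) := by
  have hS1 := congrArg (2 ^ k * ·) (sum_Icc_id_mul_two (2 ^ (n + 1)))
  have hS2 := Nat.mul_le_mul_left (2 ^ k) (sum_sum_block_completion_mul_two_le hkn.le)
  have hS3 := two_pow_mul_sum_last_block_completion_mul_two hkn.le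
  have hn : n + 2 ≤ 2 * 2 ^ n := by have := Nat.lt_two_pow_self (n := n); omega
  have hnk : n - k + k = n := Nat.sub_add_cancel hkn.le
  rw [pow_succ, two_mul n, pow_add] at *
  generalize 2 ^ n = C at *
  generalize 2 ^ k = A at *
  generalize n - k = d at *
  generalize ∑ j ∈ Icc 1 (C * 2), j = S1 at *
  generalize ∑ i ∈ Icc 1 (k - 1), ∑ j ∈ Icc 1 (2 ^ (n - i)), (i * C + j * 2 ^ i) = S2 at *
  generalize ∑ j ∈ Icc 1 (d * 2 ^ d), (k * C + j * A) = S3 at *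
  subst hnk
  nlinarith [Nat.mul_le_mul_right (A * C) hn, Nat.zero_le (d * d * C * C)]

theorem static_opt_bound (n k : ℕ) (hk : 1 ≤ k) (hkn : k < n) :
    2 ^ k * (∑ j ∈ Finset.Icc 1 (2 ^ (n + 1)), j
      + ∑ i ∈ Finset.Icc 1 (k - 1), ∑ j ∈ Finset.Icc 1 (2 ^ (n - i)), (i * 2 ^ n + j * 2 ^ i)
      + ∑ j ∈ Finset.Icc 1 ((n - k) * 2 ^ (n - k)), (k * 2 ^ n + j * 2 ^ k))
    ≤ 2 ^ (2 * n) * (7 * 2 ^ k + n * (n - k)) :=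
  static_opt_bound_general n k hkn
end
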